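/- arXiv:math/0509393 — 2 statements merged into one kernel-verified Lean document; each statement's English description precedes it below -/
import Mathlib

section
/- Let J be a linear generalized complex structure on V ⊕ V* with ±i-eigenspaces E± in the complexification, let B ⊆ V ⊕ V* be a subspace with B⊥ ⊆ B (coisotropic for the pairing), and let E'± be the images of E± ∩ B_ℂ in B_ℂ/B⊥_ℂ. Then E'₊ ∩ E'₋ = 0 if and only if J(B⊥) ∩ B ⊆ B⊥. -/
open Module LinearMap TensorProduct

set_option maxSynthPendingDepth 3

/-- The symmetric pairing `⟨X+ξ, Y+η⟩ = (ξ(Y) + η(X))/2` on `V ⊕ V*`. -/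
noncomputable def pair (V : Type) [AddCommGroup V] [Module ℝ V] :
    LinearMap.BilinForm ℝ (V × Module.Dual ℝ V) :=
  LinearMap.mk₂ ℝ (fun u v => (u.2 v.1 + v.2 u.1) / 2)
    (by intro m₁ m₂ n; simp; ring)
    (by intro c m n; simp [smul_eq_mul]; ring)
    (by intro m n₁ n₂; simp; ring)
    (by intro c m n; simp [smul_eq_mul]; ring)

/-- The `μ`-eigenspace of the complexification of `J` in `(V ⊕ V*) ⊗ ℂ`. -/
noncomputable def eig (V : Type) [AddCommGroup V] [Module ℝ V]
    (J : (V × Module.Dual ℝ V) →ₗ[ℝ] (V × Module.Dual ℝ V)) (μ : ℂ) :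
    Submodule ℂ (ℂ ⊗[ℝ] (V × Module.Dual ℝ V)) where
  carrier := {u | J.baseChange ℂ u = μ • u}
  add_mem' := by
    intro a b ha hb
    simp only [Set.mem_setOf_eq, map_add] at *
    rw [ha, hb, smul_add]
  zero_mem' := by simp
  smul_mem' := by
    intro c u hu
    simp only [Set.mem_setOf_eq, map_smul] at *
    rw [hu, smul_comm]

set_option linter.unusedVariables false
set_option maxHeartbeats 1000000

section Aux
variable {M N : Type*} [AddCommGroup M] [Module ℝ M] [AddCommGroup N] [Module ℝ N]

/-- Real part of an element of `ℂ ⊗[ℝ] M`. -/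
noncomputable def reT (M : Type*) [AddCommGroup M] [Module ℝ M] : ℂ ⊗[ℝ] M →ₗ[ℝ] M :=
  (TensorProduct.lid ℝ M).toLinearMap ∘ₗ Complex.reLm.rTensor M

/-- Imaginary part of an element of `ℂ ⊗[ℝ] M`. -/
noncomputable def imT (M : Type*) [AddCommGroup M] [Module ℝ M] : ℂ ⊗[ℝ] M →ₗ[ℝ] M :=
  (TensorProduct.lid ℝ M).toLinearMap ∘ₗ Complex.imLm.rTensor M

@[simp] lemma reT_tmul (z : ℂ) (m : M) : reT M (z ⊗ₜ m) = z.re • m := by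
  simp [reT]

@[simp] lemma imT_tmul (z : ℂ) (m : M) : imT M (z ⊗ₜ m) = z.im • m := by
  simp [imT]

lemma reT_smul (z : ℂ) (u : ℂ ⊗[ℝ] M) :
    reT M (z • u) = z.re • reT M u - z.im • imT M u := by
  induction u using TensorProduct.induction_on with
  | zero => simp
  | tmul w m =>
      rw [smul_tmul']
      simp only [smul_eq_mul, reT_tmul, imT_tmul, Complex.mul_re, sub_smul, mul_smul]
  | add x y hx hy =>
      simp only [smul_add, map_add, hx, hy, smul_add]
      abel

lemma imT_smul (z : ℂ) (u : ℂ ⊗[ℝ] M) :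
    imT M (z • u) = z.re • imT M u + z.im • reT M u := by
  induction u using TensorProduct.induction_on with
  | zero => simp
  | tmul w m =>
      rw [smul_tmul']
      simp only [smul_eq_mul, reT_tmul, imT_tmul, Complex.mul_im, add_smul, mul_smul]
      try abel
  | add x y hx hy =>
      simp only [smul_add, map_add, hx, hy, smul_add]
      abel

lemma decompT (u : ℂ ⊗[ℝ] M) :
    (1 : ℂ) ⊗ₜ[ℝ] reT M u + Complex.I • ((1 : ℂ) ⊗ₜ[ℝ] imT M u) = u := by
  induction u using TensorProduct.induction_on with
  | zero => simp
  | tmul z m =>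
      rw [reT_tmul, imT_tmul, tmul_smul, tmul_smul,
        ← algebraMap_smul ℂ z.re ((1:ℂ) ⊗ₜ[ℝ] m), ← algebraMap_smul ℂ z.im ((1:ℂ) ⊗ₜ[ℝ] m),
        smul_smul, ← add_smul]
      simp only [Complex.coe_algebraMap]
      rw [show ((z.re : ℂ) + Complex.I * (z.im : ℂ)) = z by rw [mul_comm]; exact Complex.re_add_im z,
        smul_tmul', smul_eq_mul, mul_one]
  | add x y hx hy =>
      simp only [map_add, tmul_add, smul_add]
      rw [add_add_add_comm, hx, hy]

lemma reT_baseChange (f : M →ₗ[ℝ] N) (u : ℂ ⊗[ℝ] M) :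
    reT N (f.baseChange ℂ u) = f (reT M u) := by
  induction u using TensorProduct.induction_on with
  | zero => simp
  | tmul z m => simp
  | add x y hx hy => simp [hx, hy]

lemma imT_baseChange (f : M →ₗ[ℝ] N) (u : ℂ ⊗[ℝ] M) :
    imT N (f.baseChange ℂ u) = f (imT M u) := by
  induction u using TensorProduct.induction_on with
  | zero => simp
  | tmul z m => simp
  | add x y hx hy => simp [hx, hy]

lemma mem_baseChange_iff' (p : Submodule ℝ M) (u : ℂ ⊗[ℝ] M) :
    u ∈ p.baseChange ℂ ↔ reT M u ∈ p ∧ imT M u ∈ p := by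
  constructor
  · intro hu
    let Q : Submodule ℂ (ℂ ⊗[ℝ] M) :=
      { carrier := {u | reT M u ∈ p ∧ imT M u ∈ p}
        add_mem' := by
          rintro a b ⟨ha1, ha2⟩ ⟨hb1, hb2⟩
          exact ⟨by simpa using p.add_mem ha1 hb1, by simpa using p.add_mem ha2 hb2⟩
        zero_mem' := by simp
        smul_mem' := by
          rintro z u ⟨h1, h2⟩
          refine ⟨?_, ?_⟩
          · rw [reT_smul]
            exact p.sub_mem (p.smul_mem _ h1) (p.smul_mem _ h2)
          · rw [imT_smul]
            exact p.add_mem (p.smul_mem _ h2) (p.smul_mem _ h1) }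
    have : p.baseChange ℂ ≤ Q := by
      rw [Submodule.baseChange_eq_span, Submodule.span_le]
      rintro _ ⟨m, hm, rfl⟩
      exact ⟨by simpa using hm, by simp⟩
    exact this hu
  · rintro ⟨h1, h2⟩
    rw [← decompT u]
    exact Submodule.add_mem _ (Submodule.tmul_mem_baseChange_of_mem 1 h1)
      (Submodule.smul_mem _ _ (Submodule.tmul_mem_baseChange_of_mem 1 h2))

lemma tmul_one_mem_baseChange_iff (p : Submodule ℝ M) (m : M) :
    (1 : ℂ) ⊗ₜ[ℝ] m ∈ p.baseChange ℂ ↔ m ∈ p := by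
  simp [mem_baseChange_iff']

end Aux

lemma mem_eig {V : Type} [AddCommGroup V] [Module ℝ V]
    {J : (V × Module.Dual ℝ V) →ₗ[ℝ] (V × Module.Dual ℝ V)} {μ : ℂ}
    {u : ℂ ⊗[ℝ] (V × Module.Dual ℝ V)} :
    u ∈ eig V J μ ↔ J.baseChange ℂ u = μ • u := Iff.rfl

/-- Let `J` be a linear generalized complex structure on `V ⊕ V*` with
`±i`-eigenspaces `E±`, and `B` a coisotropic subspace (`B⊥ ⊆ B`).  Let `E'±`
be the images of `E± ∩ B_ℂ` in the quotient by `B⊥_ℂ`.  Then `E'₊ ∩ E'₋ = 0`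
if and only if `J(B⊥) ∩ B ⊆ B⊥`. -/
theorem reduced_eigenspaces_trivial_intersection_iff
    (V : Type) [AddCommGroup V] [Module ℝ V] [FiniteDimensional ℝ V]
    (J : (V × Module.Dual ℝ V) →ₗ[ℝ] (V × Module.Dual ℝ V))
    (hJ2 : ∀ u, J (J u) = -u)
    (horth : ∀ u v, pair V (J u) (J v) = pair V u v)
    (B : Submodule ℝ (V × Module.Dual ℝ V))
    (hco : (pair V).orthogonal B ≤ B) :
    (Submodule.map (((pair V).orthogonal B).baseChange ℂ).mkQ
        (eig V J Complex.I ⊓ B.baseChange ℂ) ⊓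
     Submodule.map (((pair V).orthogonal B).baseChange ℂ).mkQ
        (eig V J (-Complex.I) ⊓ B.baseChange ℂ) = ⊥) ↔
    (Submodule.map J ((pair V).orthogonal B) ⊓ B ≤ (pair V).orthogonal B) := by
  set M := V × Module.Dual ℝ V
  set P : Submodule ℝ M := (pair V).orthogonal B with hPdef
  constructor
  · intro H w hw
    rw [Submodule.mem_inf] at hw
    obtain ⟨⟨u, hu, rfl⟩, hwB⟩ := hw
    -- a = (u - i Ju)/2  ∈ E₊,  b = (u + i Ju)/2 ∈ E₋
    set x : ℂ ⊗[ℝ] M := (1 : ℂ) ⊗ₜ[ℝ] u with hx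
    set y : ℂ ⊗[ℝ] M := (1 : ℂ) ⊗ₜ[ℝ] (J u) with hy
    have hJx : J.baseChange ℂ x = y := by simp [hx, hy]
    have hJy : J.baseChange ℂ y = -x := by simp [hx, hy, hJ2, tmul_neg]
    set a : ℂ ⊗[ℝ] M := (1/2 : ℂ) • (x - Complex.I • y) with ha
    set b : ℂ ⊗[ℝ] M := (1/2 : ℂ) • (x + Complex.I • y) with hb
    have haE : a ∈ eig V J Complex.I := by
      rw [mem_eig, ha, map_smul, map_sub, map_smul, hJx, hJy]
      match_scalars <;> ring_nf <;> norm_num [Complex.I_sq]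
    have hbE : b ∈ eig V J (-Complex.I) := by
      rw [mem_eig, hb, map_smul, map_add, map_smul, hJx, hJy]
      match_scalars <;> ring_nf <;> norm_num [Complex.I_sq]
    have huB : u ∈ B := hco hu
    have hxB : x ∈ B.baseChange ℂ := Submodule.tmul_mem_baseChange_of_mem 1 huB
    have hyB : y ∈ B.baseChange ℂ := Submodule.tmul_mem_baseChange_of_mem 1 hwB
    have haB : a ∈ B.baseChange ℂ :=
      Submodule.smul_mem _ _ (Submodule.sub_mem _ hxB (Submodule.smul_mem _ _ hyB))
    have hbB : b ∈ B.baseChange ℂ :=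
      Submodule.smul_mem _ _ (Submodule.add_mem _ hxB (Submodule.smul_mem _ _ hyB))
    have hxP : x ∈ P.baseChange ℂ := Submodule.tmul_mem_baseChange_of_mem 1 hu
    have hab : a + b = x := by rw [ha, hb]; module
    have hmk : (P.baseChange ℂ).mkQ a ∈
        (Submodule.map (P.baseChange ℂ).mkQ (eig V J Complex.I ⊓ B.baseChange ℂ) ⊓
         Submodule.map (P.baseChange ℂ).mkQ (eig V J (-Complex.I) ⊓ B.baseChange ℂ)) := by
      rw [Submodule.mem_inf]
      constructor
      · exact ⟨a, Submodule.mem_inf.mpr ⟨haE, haB⟩, rfl⟩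
      · refine ⟨-b, Submodule.mem_inf.mpr ⟨Submodule.neg_mem _ hbE, Submodule.neg_mem _ hbB⟩, ?_⟩
        rw [Submodule.mkQ_apply, Submodule.mkQ_apply, Submodule.Quotient.eq]
        have : -b - a = -x := by rw [← hab]; abel
        rw [this]
        exact Submodule.neg_mem _ hxP
    rw [H, Submodule.mem_bot, Submodule.mkQ_apply, Submodule.Quotient.mk_eq_zero] at hmk
    have hbP : b ∈ P.baseChange ℂ := by
      have : b = x - a := by rw [← hab]; abel
      rw [this]; exact Submodule.sub_mem _ hxP hmk
    have hyP : y ∈ P.baseChange ℂ := by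
      have : y = (-Complex.I) • (b - a) := by
        rw [ha, hb]; match_scalars <;> ring_nf <;> norm_num [Complex.I_sq]
      rw [this]
      exact Submodule.smul_mem _ _ (Submodule.sub_mem _ hbP hmk)
    exact (tmul_one_mem_baseChange_iff P (J u)).mp hyP
  · intro H
    rw [eq_bot_iff]
    intro ξ hξ
    rw [Submodule.mem_inf] at hξ
    obtain ⟨⟨a, haEB, hax⟩, ⟨b, hbEB, hbx⟩⟩ := hξ
    simp only [SetLike.mem_coe, Submodule.mem_inf] at haEB hbEB
    obtain ⟨haE, haB⟩ := haEB
    obtain ⟨hbE, hbB⟩ := hbEB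
    have hd : a - b ∈ P.baseChange ℂ := by
      rw [← Submodule.Quotient.eq, ← Submodule.mkQ_apply, ← Submodule.mkQ_apply, hax, hbx]
    have hs : a + b ∈ B.baseChange ℂ := Submodule.add_mem _ haB hbB
    have hJd : J.baseChange ℂ (a - b) = Complex.I • (a + b) := by
      rw [map_sub, mem_eig.mp haE, mem_eig.mp hbE]
      module
    rw [mem_baseChange_iff'] at hd hs
    obtain ⟨hdr, hdi⟩ := hd
    obtain ⟨hsr, hsi⟩ := hs
    have hre : J (reT M (a - b)) = -(imT M (a + b)) := by
      rw [← reT_baseChange, hJd, reT_smul]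
      simp
      rfl
    have him : J (imT M (a - b)) = reT M (a + b) := by
      rw [← imT_baseChange, hJd, imT_smul]
      simp
      rfl
    have hsrP : reT M (a + b) ∈ P := by
      apply H
      rw [Submodule.mem_inf]
      exact ⟨⟨imT M (a - b), hdi, him⟩, hsr⟩
    have hsiP : imT M (a + b) ∈ P := by
      rw [← neg_neg (imT M (a + b))]
      apply Submodule.neg_mem
      apply H
      rw [Submodule.mem_inf]
      exact ⟨⟨reT M (a - b), hdr, hre⟩, Submodule.neg_mem _ hsi⟩
    have hsP : a + b ∈ P.baseChange ℂ := (mem_baseChange_iff' P _).mpr ⟨hsrP, hsiP⟩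
    have hdP : a - b ∈ P.baseChange ℂ := (mem_baseChange_iff' P _).mpr ⟨hdr, hdi⟩
    have haP : a ∈ P.baseChange ℂ := by
      have : a = (1/2 : ℂ) • ((a + b) + (a - b)) := by module
      rw [this]
      exact Submodule.smul_mem _ _ (Submodule.add_mem _ hsP hdP)
    rw [Submodule.mem_bot, ← hax, Submodule.mkQ_apply, Submodule.Quotient.mk_eq_zero]
    exact haP
end

section
/- If J is orthogonal with J² = -I on V ⊕ V* and B is coisotropic with J(B⊥) = B⊥, then J(B) = B, and consequently J descends to a well-defined complex structure J' on B/B⊥ (i.e., an endomorphism with (J')² = -I). -/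
open Module LinearMap

set_option maxSynthPendingDepth 3

lemma pair_apply (V : Type) [AddCommGroup V] [Module ℝ V]
    (u v : V × Module.Dual ℝ V) : pair V u v = (u.2 v.1 + v.2 u.1) / 2 := rfl

lemma pair_nondeg (V : Type) [AddCommGroup V] [Module ℝ V] [FiniteDimensional ℝ V] :
    (pair V).Nondegenerate := by
  apply (LinearMap.IsRefl.nondegenerate_iff_separatingLeft (B := pair V)
    (by intro u v h; simp [pair_apply] at h ⊢; linarith)).2
  intro u hu
  have h1 : u.2 = 0 := by
    ext y
    have := hu (y, 0)
    simp [pair_apply] at this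
    simpa using this
  have h2 : u.1 = 0 := by
    rw [← Module.forall_dual_apply_eq_zero_iff ℝ]
    intro η
    have := hu (0, η)
    simp [pair_apply] at this
    simpa using this
  exact Prod.ext h2 h1

lemma pair_refl (V : Type) [AddCommGroup V] [Module ℝ V] : (pair V).IsRefl := by
  intro u v h
  simp [pair_apply] at h ⊢
  linarith

/-- If `J` is orthogonal with `J² = -I` and `B` is coisotropic with
`J(B⊥) = B⊥`, then `J(B) = B` and `J` descends to a complex structure `J'`
on `B/B⊥`. -/
theorem j_descends_to_quotient
    (V : Type) [AddCommGroup V] [Module ℝ V] [FiniteDimensional ℝ V]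
    (J : (V × Module.Dual ℝ V) →ₗ[ℝ] (V × Module.Dual ℝ V))
    (hJ2 : ∀ u, J (J u) = -u)
    (horth : ∀ u v, pair V (J u) (J v) = pair V u v)
    (B : Submodule ℝ (V × Module.Dual ℝ V))
    (hco : (pair V).orthogonal B ≤ B)
    (hstab : Submodule.map J ((pair V).orthogonal B) = (pair V).orthogonal B) :
    Submodule.map J B = B ∧
    ∃ J' : (B ⧸ Submodule.comap B.subtype ((pair V).orthogonal B)) →ₗ[ℝ]
           (B ⧸ Submodule.comap B.subtype ((pair V).orthogonal B)),
      (∀ (x : V × Module.Dual ℝ V) (hx : x ∈ B) (hJx : J x ∈ B),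
        J' (Submodule.Quotient.mk ⟨x, hx⟩) = Submodule.Quotient.mk ⟨J x, hJx⟩) ∧
      (∀ q, J' (J' q) = -q) := by
  -- J is surjective: J (-(J u)) = u
  have hsurj : ∀ u, ∃ w, J w = u := fun u => ⟨-(J u), by rw [map_neg, hJ2, neg_neg]⟩
  -- key: orthogonal of (map J W) = map J (orthogonal W)
  have key : ∀ W : Submodule ℝ (V × Module.Dual ℝ V),
      (pair V).orthogonal (Submodule.map J W) = Submodule.map J ((pair V).orthogonal W) := by
    intro W
    ext u
    obtain ⟨w, rfl⟩ := hsurj u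
    simp only [Submodule.mem_map, LinearMap.BilinForm.mem_orthogonal_iff]
    constructor
    · intro h
      refine ⟨w, fun n hn => ?_, rfl⟩
      have := h (J n) ⟨n, hn, rfl⟩
      rwa [horth] at this
    · rintro ⟨y, hy, hyw⟩ n hn
      obtain ⟨m, hm, rfl⟩ := hn
      have hwy : w = y := by
        have := congrArg J hyw
        rw [hJ2, hJ2] at this
        exact (neg_injective this).symm
      subst hwy
      rw [horth]
      exact hy m hm
  have hnd := pair_nondeg V
  have hrf := pair_refl V
  -- J(B) = B
  have hmap : Submodule.map J B = B := by
    have h1 : (pair V).orthogonal (Submodule.map J B) = (pair V).orthogonal B := by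
      rw [key, hstab]
    have := congrArg ((pair V).orthogonal) h1
    rwa [(pair V).orthogonal_orthogonal hnd hrf, (pair V).orthogonal_orthogonal hnd hrf] at this
  -- J restricted to B
  have hJB : ∀ x ∈ B, J x ∈ B := by
    intro x hx
    rw [← hmap]; exact ⟨x, hx, rfl⟩
  set N := Submodule.comap B.subtype ((pair V).orthogonal B) with hN
  let f : B →ₗ[ℝ] B :=
    { toFun := fun b => ⟨J b, hJB b b.2⟩
      map_add' := fun a b => by apply Subtype.ext; simp
      map_smul' := fun c b => by apply Subtype.ext; simp }
  have hfN : ∀ b : B, b ∈ N → f b ∈ N := by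
    intro b hb
    have h1 : (b : V × Module.Dual ℝ V) ∈ (pair V).orthogonal B := hb
    have h2 : J b ∈ (pair V).orthogonal B := by
      rw [← hstab]; exact ⟨b, h1, rfl⟩
    exact h2
  have hle : N ≤ LinearMap.ker ((N.mkQ).comp f) := by
    intro b hb
    simp [Submodule.Quotient.mk_eq_zero]
    exact hfN b hb
  refine ⟨hmap, Submodule.liftQ N ((N.mkQ).comp f) hle, ?_, ?_⟩
  · intro x hx hJx
    have : f ⟨x, hx⟩ = ⟨J x, hJx⟩ := rfl
    simp only [Submodule.liftQ_apply, LinearMap.comp_apply, this, Submodule.mkQ_apply]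
  · intro q
    obtain ⟨b, rfl⟩ := Submodule.mkQ_surjective N q
    simp only [Submodule.mkQ_apply, Submodule.liftQ_apply, LinearMap.comp_apply,
      Submodule.mkQ_apply]
    have : f (f b) = -b := by
      apply Subtype.ext; simp [f, hJ2]
    rw [this]
    simp
end
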